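/- arXiv:1803.09483 — 2 statements merged into one kernel-verified Lean document; each statement's English description precedes it below -/
import Mathlib

section
/- Let (H,x) be a properly r-boundaried weighted graph and let p be a positive integer. Suppose that for every connected component C of H containing a vertex outside the boundary x there is a vertex v ∈ V(C)∖x with λ_H(x∩V(C), v) ≤ p. Then there exists a properly r-boundaried weighted graph (H',x') with at most 2^{2^{r−1}} + r vertices such that (a) for every r-boundaried weighted graph (F,y), if (F,y)⊕_b(H,x) is connected with λ((F,y)⊕_b(H,x)) ≤ p, then λ((F,y)⊕_b(H',x')) = λ((F,y)⊕_b(H,x)); and (b) for every connected component C' of H' containing a vertex outside x' there is a vertex v ∈ V(C')∖x' with λ_{H'}(x'∩V(C'), v) ≤ p. -/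
open scoped Classical

/-- The weighted connectivity of `(G,w)`: the largest `k ∈ ℕ∞` such that deleting any
edge set of total weight at most `k - 1` leaves `G` connected (`+∞` for a one-vertex
graph). -/
noncomputable def weightConn {V : Type*} [Fintype V] (G : SimpleGraph V) (w : Sym2 V → ℕ) :
    ℕ∞ :=
  sSup {k : ℕ∞ | ∀ S : Finset (Sym2 V), ↑S ⊆ G.edgeSet →
    (∑ e ∈ S, (w e : ℕ∞)) < k → (G.deleteEdges ↑S).Connected}

/-- The minimum total weight of an `(A,B)`-separator: an edge set `S` such that `G - S`
has no path from a vertex of `A` to a vertex of `B` (`+∞` if no separator exists). -/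
noncomputable def sepW {V : Type*} [Fintype V] (G : SimpleGraph V) (w : Sym2 V → ℕ)
    (A B : Set V) : ℕ∞ :=
  sInf {c : ℕ∞ | ∃ S : Finset (Sym2 V), ↑S ⊆ G.edgeSet ∧ (∑ e ∈ S, (w e : ℕ∞)) = c ∧
    ∀ a ∈ A, ∀ b ∈ B, ¬ (G.deleteEdges ↑S).Reachable a b}

/-- `(H,x)` is a properly `r`-boundaried graph: the boundary vertices are pairwise
nonadjacent and every connected component of `H` contains a boundary vertex. -/
def ProperB {VH : Type*} {r : ℕ} (H : SimpleGraph VH) (x : Fin r ↪ VH) : Prop :=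
  (∀ i j, ¬ H.Adj (x i) (x j)) ∧ ∀ v : VH, ∃ i, H.Reachable v (x i)

/-- Every connected component of `H` containing a vertex outside the boundary `x` has a
vertex `v` outside the boundary with `λ_H(x ∩ V(C), v) ≤ p`. -/
def BdryReach {VH : Type*} {r : ℕ} [Fintype VH] (H : SimpleGraph VH) (wH : Sym2 VH → ℕ)
    (x : Fin r ↪ VH) (p : ℕ) : Prop :=
  ∀ c : H.ConnectedComponent, (∃ u ∈ c.supp, u ∉ Set.range ⇑x) →
    ∃ v ∈ c.supp, v ∉ Set.range ⇑x ∧ sepW H wH (Set.range ⇑x ∩ c.supp) {v} ≤ (p : ℕ∞)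

/-- The boundary sum `(F,y) ⊕_b (H,x)`: disjoint copies of `F` and `H` with the `i`-th
boundary vertex of `H` identified with the `i`-th boundary vertex of `F`. -/
def BSum {VF VH : Type*} {r : ℕ} (F : SimpleGraph VF) (y : Fin r → VF)
    (H : SimpleGraph VH) (x : Fin r → VH) :
    SimpleGraph (VF ⊕ {v : VH // v ∉ Set.range x}) :=
  SimpleGraph.fromRel fun a b =>
    match a, b with
    | Sum.inl a, Sum.inl b => F.Adj a b
    | Sum.inr a, Sum.inr b => H.Adj a.1 b.1
    | Sum.inl a, Sum.inr b => ∃ i, y i = a ∧ H.Adj (x i) b.1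
    | Sum.inr _, Sum.inl _ => False

/-- Auxiliary (ordered) weight function for the boundary sum. -/
noncomputable def bw {VF VH : Type*} {r : ℕ} (wF : Sym2 VF → ℕ) (wH : Sym2 VH → ℕ)
    (y : Fin r → VF) (x : Fin r → VH) :
    (VF ⊕ {v : VH // v ∉ Set.range x}) → (VF ⊕ {v : VH // v ∉ Set.range x}) → ℕ
  | Sum.inl a, Sum.inl b => wF s(a, b)
  | Sum.inr a, Sum.inr b => wH s(a.1, b.1)
  | Sum.inl a, Sum.inr b => ∑ i : Fin r, if y i = a then wH s(x i, b.1) else 0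
  | Sum.inr a, Sum.inl b => ∑ i : Fin r, if y i = b then wH s(x i, a.1) else 0

/-- The edge weights of the boundary sum `(F,y) ⊕_b (H,x)`, inherited from `wF` and
`wH`. -/
noncomputable def BSumW {VF VH : Type*} {r : ℕ} (wF : Sym2 VF → ℕ) (wH : Sym2 VH → ℕ)
    (y : Fin r → VF) (x : Fin r → VH) :
    Sym2 (VF ⊕ {v : VH // v ∉ Set.range x}) → ℕ :=
  Sym2.lift ⟨bw wF wH y x, by
    intro u v
    cases u <;> cases v <;> simp only [bw] <;> first | rfl | rw [Sym2.eq_swap]⟩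

/-!
Weighted connectivity is the minimum weight of a nontrivial cut, and a cut of `(F,y) ⊕_b (H,x)`
splits into a cut of `F` and a cut of `H` with the same boundary trace. For every trace
`A ⊆ [r]` containing index `0` fix a lightest vertex set of `H` with trace `A`, and in every
component a lightest nonempty set of interior vertices. Up to complement, any cut of `H` can be
replaced by one of these sets without becoming heavier or trivial. So identifying interior
vertices that lie in exactly the same fixed sets (at most `2^{2^{r-1}}` classes) preserves the
minimum cut of every boundary sum, and the lightest interior sets, of weight at most `p` by
hypothesis, witness (b) in the quotient.
-/

open SimpleGraph

section Cuts

variable {V : Type*}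

def Crosses (X : Set V) (e : Sym2 V) : Prop :=
  ∃ a b, e = s(a, b) ∧ a ∈ X ∧ b ∉ X

lemma crosses_mk {X : Set V} {a b : V} :
    Crosses X s(a, b) ↔ (a ∈ X ∧ b ∉ X) ∨ (b ∈ X ∧ a ∉ X) := by
  constructor
  · rintro ⟨c, d, h, hc, hd⟩
    rcases Sym2.eq_iff.mp h with ⟨rfl, rfl⟩ | ⟨rfl, rfl⟩
    exacts [Or.inl ⟨hc, hd⟩, Or.inr ⟨hc, hd⟩]
  · rintro (⟨ha, hb⟩ | ⟨hb, ha⟩)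
    exacts [⟨a, b, rfl, ha, hb⟩, ⟨b, a, Sym2.eq_swap, hb, ha⟩]

lemma crosses_compl {X : Set V} {e : Sym2 V} : Crosses Xᶜ e ↔ Crosses X e := by
  induction e using Sym2.ind with
  | _ a b => simp only [crosses_mk, Set.mem_compl_iff, not_not]; tauto

lemma crosses_map {W : Type*} (f : V → W) {X : Set W} {e : Sym2 V} :
    Crosses X (Sym2.map f e) ↔ Crosses (f ⁻¹' X) e := by
  induction e using Sym2.ind with
  | _ a b => simp only [Sym2.map_mk, crosses_mk, Set.mem_preimage]

variable [Fintype V] (G : SimpleGraph V) (w : Sym2 V → ℕ)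

noncomputable def cutWeight (X : Set V) : ℕ :=
  ∑ e ∈ G.edgeFinset with Crosses X e, w e

lemma cutWeight_compl (X : Set V) : cutWeight G w Xᶜ = cutWeight G w X := by
  simp only [cutWeight, crosses_compl]

lemma cutWeight_eq_zero_of_closed {X : Set V} (hX : ∀ u v, G.Adj u v → u ∈ X → v ∈ X) :
    cutWeight G w X = 0 := by
  refine Finset.sum_eq_zero fun e he => absurd he ?_
  simp only [Finset.mem_filter, mem_edgeFinset, not_and]
  rintro he ⟨a, b, rfl, ha, hb⟩
  exact hb (hX a b he ha)

lemma cutWeight_inter_le_of_closed (Z : Set V) {Y : Set V}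
    (hY : ∀ u v, G.Adj u v → u ∈ Y → v ∈ Y) :
    cutWeight G w (Z ∩ Y) ≤ cutWeight G w Z := by
  refine Finset.sum_le_sum_of_subset fun e he => ?_
  simp only [Finset.mem_filter, mem_edgeFinset] at he ⊢
  obtain ⟨he, a, b, rfl, ⟨ha, haY⟩, hb⟩ := he
  exact ⟨he, a, b, rfl, ha, fun hbZ => hb ⟨hbZ, hY a b he haY⟩⟩

lemma not_reachable_deleteEdges_crossing {X : Set V} {a b : V} (ha : a ∈ X) (hb : b ∉ X) :
    ¬ (G.deleteEdges ↑(G.edgeFinset.filter (Crosses X))).Reachable a b := by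
  rintro ⟨p⟩
  obtain ⟨d, -, hd₁, hd₂⟩ := p.exists_boundary_dart X ha hb
  have hadj := d.adj
  rw [deleteEdges_adj] at hadj
  refine hadj.2 ?_
  simp only [Finset.coe_filter, mem_edgeFinset, Set.mem_ofPred_eq]
  exact ⟨hadj.1, _, _, rfl, hd₁, hd₂⟩

lemma cutWeight_reachSet_le (S : Finset (Sym2 V)) (a : V) :
    cutWeight G w {u | (G.deleteEdges ↑S).Reachable a u} ≤ ∑ e ∈ S, w e := by
  refine Finset.sum_le_sum_of_subset fun e he => ?_
  simp only [Finset.mem_filter, mem_edgeFinset] at he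
  obtain ⟨he, u, v, rfl, hu, hv⟩ := he
  by_contra hS
  exact hv (hu.trans (Adj.reachable ((deleteEdges_adj ..).mpr ⟨he, hS⟩)))

lemma weightConn_eq_iInf_cutWeight [Nonempty V] :
    weightConn G w =
      ⨅ (X : Set V) (_ : X.Nonempty) (_ : Xᶜ.Nonempty), (cutWeight G w X : ℕ∞) := by
  apply le_antisymm
  · refine sSup_le fun k hk => le_iInf₂ fun X ⟨a, ha⟩ => le_iInf fun ⟨b, hb⟩ => ?_
    by_contra! hlt
    set S := G.edgeFinset.filter (Crosses X)
    have hconn := hk S (fun e he => mem_edgeFinset.mp (Finset.mem_filter.mp he).1)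
      (by rwa [cutWeight, Nat.cast_sum] at hlt)
    exact not_reachable_deleteEdges_crossing G ha hb (hconn.preconnected a b)
  · refine le_sSup fun S _ hlt => (connected_iff _).mpr ⟨fun a b => ?_, inferInstance⟩
    by_contra hab
    set X := {u | (G.deleteEdges ↑S).Reachable a u}
    have hX : (⨅ (X : Set V) (_ : X.Nonempty) (_ : Xᶜ.Nonempty), (cutWeight G w X : ℕ∞))
        ≤ cutWeight G w X :=
      iInf₂_le_of_le X ⟨a, Reachable.refl a⟩ (iInf_le _ ⟨b, hab⟩)
    have hS : (cutWeight G w X : ℕ∞) ≤ ∑ e ∈ S, (w e : ℕ∞) := by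
      exact_mod_cast cutWeight_reachSet_le G w S a
    exact (hX.trans hS).not_gt hlt

lemma weightConn_le_of_forall_cutWeight {V' : Type*} [Fintype V'] [Nonempty V] [Nonempty V']
    {G' : SimpleGraph V'} {w' : Sym2 V' → ℕ}
    (h : ∀ X : Set V, X.Nonempty → Xᶜ.Nonempty →
      ∃ X' : Set V', X'.Nonempty ∧ X'ᶜ.Nonempty ∧ cutWeight G' w' X' ≤ cutWeight G w X) :
    weightConn G' w' ≤ weightConn G w := by
  rw [weightConn_eq_iInf_cutWeight, weightConn_eq_iInf_cutWeight]
  refine le_iInf₂ fun X hX => le_iInf fun hXc => ?_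
  obtain ⟨X', hX', hX'c, hle⟩ := h X hX hXc
  exact iInf₂_le_of_le X' hX' (iInf_le_of_le hX'c (by exact_mod_cast hle))

lemma sepW_le_cutWeight {A X : Set V} {v : V} (hv : v ∈ X) (hA : ∀ a ∈ A, a ∉ X) :
    sepW G w A {v} ≤ cutWeight G w X := by
  refine sInf_le ⟨G.edgeFinset.filter (Crosses Xᶜ), fun e he => ?_, ?_, ?_⟩
  · exact mem_edgeFinset.mp (Finset.mem_filter.mp he).1
  · rw [cutWeight, Nat.cast_sum]
    simp only [crosses_compl]
  · rintro a ha b rfl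
    exact not_reachable_deleteEdges_crossing G (hA a ha) (not_not.mpr hv)

lemma exists_cutWeight_le_of_sepW_le {A : Set V} {v : V} {p : ℕ}
    (h : sepW G w A {v} ≤ p) :
    ∃ Y : Set V, v ∈ Y ∧ (∀ u ∈ Y, G.Reachable v u) ∧ (∀ a ∈ A, a ∉ Y) ∧
      cutWeight G w Y ≤ p := by
  have hne : {c : ℕ∞ | ∃ S : Finset (Sym2 V), ↑S ⊆ G.edgeSet ∧ (∑ e ∈ S, (w e : ℕ∞)) = c ∧
      ∀ a ∈ A, ∀ b ∈ ({v} : Set V), ¬ (G.deleteEdges ↑S).Reachable a b}.Nonempty := by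
    by_contra hs
    rw [Set.not_nonempty_iff_eq_empty] at hs
    rw [sepW, hs, sInf_empty] at h
    exact absurd h (by simp)
  obtain ⟨S, -, hSw, hS⟩ := csInf_mem hne
  refine ⟨{u | (G.deleteEdges ↑S).Reachable v u}, Reachable.refl v,
    fun u hu => hu.mono (deleteEdges_le _), fun a ha hva => hS a ha v rfl hva.symm, ?_⟩
  have hSp : ((∑ e ∈ S, w e : ℕ) : ℕ∞) ≤ p := by
    rw [Nat.cast_sum, hSw]
    exact h
  exact (cutWeight_reachSet_le G w S v).trans (by exact_mod_cast hSp)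

end Cuts

section MinCut

variable {V : Type*} [Fintype V] (G : SimpleGraph V) (w : Sym2 V → ℕ) (P : Set V → Prop)

/-- `∅` if no set satisfies `P`. -/
noncomputable def minCutSet : Set V :=
  if h : ∃ Y, P Y then
    (Set.exists_min_image {Y | P Y} (cutWeight G w) (Set.toFinite _) h).choose
  else ∅

variable {G w P}

lemma minCutSet_spec {Y : Set V} (hY : P Y) : P (minCutSet G w P) := by
  rw [minCutSet, dif_pos ⟨Y, hY⟩]
  exact (Set.exists_min_image {Y | P Y} (cutWeight G w) (Set.toFinite _) ⟨Y, hY⟩).choose_spec.1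

lemma cutWeight_minCutSet_le {Y : Set V} (hY : P Y) :
    cutWeight G w (minCutSet G w P) ≤ cutWeight G w Y := by
  rw [minCutSet, dif_pos ⟨Y, hY⟩]
  exact (Set.exists_min_image {Y | P Y} (cutWeight G w) (Set.toFinite _) ⟨Y, hY⟩).choose_spec.2
    Y hY

lemma minCutSet_of_not_exists (h : ¬ ∃ Y, P Y) : minCutSet G w P = ∅ := dif_neg h

end MinCut

section ImageGraph

variable {V W : Type*} (H : SimpleGraph V) (w : Sym2 V → ℕ) (φ : V → W)

def imageGraph : SimpleGraph W :=
  SimpleGraph.fromRel fun a b => ∃ u v, H.Adj u v ∧ φ u = a ∧ φ v = b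

noncomputable def imageWeight [Fintype V] (E : Sym2 W) : ℕ :=
  ∑ e ∈ H.edgeFinset with Sym2.map φ e = E, w e

variable {H φ}

lemma imageGraph_adj {a b : W} :
    (imageGraph H φ).Adj a b ↔ a ≠ b ∧ ∃ u v, H.Adj u v ∧ φ u = a ∧ φ v = b := by
  rw [imageGraph, fromRel_adj]
  constructor
  · rintro ⟨hne, ⟨u, v, huv, rfl, rfl⟩ | ⟨u, v, huv, rfl, rfl⟩⟩
    exacts [⟨hne, u, v, huv, rfl, rfl⟩, ⟨hne, v, u, huv.symm, rfl, rfl⟩]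
  · rintro ⟨hne, h⟩
    exact ⟨hne, Or.inl h⟩

lemma SimpleGraph.Adj.imageGraph {u v : V} (huv : H.Adj u v) (hne : φ u ≠ φ v) :
    (imageGraph H φ).Adj (φ u) (φ v) :=
  imageGraph_adj.mpr ⟨hne, u, v, huv, rfl, rfl⟩

lemma SimpleGraph.Reachable.imageGraph {u v : V} (h : H.Reachable u v) :
    (imageGraph H φ).Reachable (φ u) (φ v) := by
  obtain ⟨p⟩ := h
  induction p with
  | nil => rfl
  | @cons a b _ hab _ ih =>
    by_cases heq : φ a = φ b
    · rwa [heq]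
    · exact (hab.imageGraph heq).reachable.trans ih

variable [Fintype V]

lemma imageWeight_pos (hw : ∀ e ∈ H.edgeSet, 0 < w e) :
    ∀ E ∈ (imageGraph H φ).edgeSet, 0 < imageWeight H w φ E := by
  intro E hE
  induction E using Sym2.ind with
  | _ a b =>
    obtain ⟨-, u, v, huv, rfl, rfl⟩ := imageGraph_adj.mp hE
    refine (hw s(u, v) huv).trans_le (Finset.single_le_sum (fun _ _ => Nat.zero_le _) ?_)
    simpa [Sym2.map_mk] using huv

lemma cutWeight_imageGraph [Fintype W] (Z : Set W) :
    cutWeight (imageGraph H φ) (imageWeight H w φ) Z = cutWeight H w (φ ⁻¹' Z) := by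
  rw [cutWeight, cutWeight]
  simp only [imageWeight]
  rw [Finset.sum_fiberwise_eq_sum_filter]
  refine Finset.sum_congr (Finset.filter_congr fun e he => ?_) fun _ _ => rfl
  rw [Finset.mem_filter, crosses_map]
  refine and_iff_right_of_imp fun ⟨a, b, hab, ha, hb⟩ => ?_
  subst hab
  have hne : φ a ≠ φ b := fun h => hb (by simpa [h] using ha)
  simpa [Sym2.map_mk] using (mem_edgeFinset.mp he).imageGraph hne

end ImageGraph

section BoundarySum

variable {VF VH : Type*} {r : ℕ} (F : SimpleGraph VF) (H : SimpleGraph VH)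

lemma bSum_adj_inl_inl (y : Fin r → VF) (x : Fin r → VH) {a b : VF} :
    (BSum F y H x).Adj (.inl a) (.inl b) ↔ F.Adj a b := by
  rw [BSum, fromRel_adj]
  exact ⟨fun ⟨_, h⟩ => h.elim id Adj.symm, fun h => ⟨by simp [h.ne], Or.inl h⟩⟩

lemma bSum_adj_inr_inr (y : Fin r → VF) (x : Fin r → VH) {a b : {v // v ∉ Set.range x}} :
    (BSum F y H x).Adj (.inr a) (.inr b) ↔ H.Adj a.1 b.1 := by
  rw [BSum, fromRel_adj]
  exact ⟨fun ⟨_, h⟩ => h.elim id Adj.symm,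
    fun h => ⟨by simp [Subtype.ext_iff, h.ne], Or.inl h⟩⟩

lemma bSum_adj_inl_inr (y : Fin r → VF) (x : Fin r → VH) {a : VF}
    {b : {v // v ∉ Set.range x}} :
    (BSum F y H x).Adj (.inl a) (.inr b) ↔ ∃ i, y i = a ∧ H.Adj (x i) b.1 := by
  rw [BSum, fromRel_adj]
  exact ⟨fun ⟨_, h⟩ => h.elim id False.elim, fun h => ⟨by simp, Or.inl h⟩⟩

variable {F H} (y : Fin r ↪ VF) (x : Fin r ↪ VH)

noncomputable def glueMap (v : VH) : VF ⊕ {v : VH // v ∉ Set.range x} :=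
  if h : v ∈ Set.range x then .inl (y h.choose) else .inr ⟨v, h⟩

lemma glueMap_apply_boundary (i : Fin r) : glueMap y x (x i) = .inl (y i) := by
  have h : x i ∈ Set.range x := ⟨i, rfl⟩
  rw [glueMap, dif_pos h, x.injective h.choose_spec]

lemma glueMap_apply_interior (v : {v : VH // v ∉ Set.range x}) :
    glueMap y x v.1 = .inr v :=
  dif_neg v.2

lemma glueMap_injective : Function.Injective (glueMap y x) := by
  intro u v huv
  by_cases hu : u ∈ Set.range x <;> by_cases hv : v ∈ Set.range x
  · obtain ⟨⟨i, rfl⟩, ⟨j, rfl⟩⟩ := And.intro hu hv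
    simp only [glueMap_apply_boundary, Sum.inl.injEq, y.injective.eq_iff] at huv
    rw [huv]
  · obtain ⟨i, rfl⟩ := hu
    simp [glueMap_apply_boundary, glueMap_apply_interior y x ⟨v, hv⟩] at huv
  · obtain ⟨j, rfl⟩ := hv
    simp [glueMap_apply_boundary, glueMap_apply_interior y x ⟨u, hu⟩] at huv
  · simpa [glueMap_apply_interior y x ⟨u, hu⟩, glueMap_apply_interior y x ⟨v, hv⟩] using huv

omit y in
def glueSet (XF : Set VF) (Z : Set VH) : Set (VF ⊕ {v : VH // v ∉ Set.range x}) :=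
  {p | p.elim (· ∈ XF) (·.1 ∈ Z)}

omit y in
lemma compl_glueSet (XF : Set VF) (Z : Set VH) : (glueSet x XF Z)ᶜ = glueSet x XFᶜ Zᶜ := by
  ext (_ | _) <;> rfl

lemma preimage_glueMap_glueSet {XF : Set VF} {Z : Set VH} (h : x ⁻¹' Z = y ⁻¹' XF) :
    glueMap y x ⁻¹' glueSet x XF Z = Z := by
  ext v
  by_cases hv : v ∈ Set.range x
  · obtain ⟨i, rfl⟩ := hv
    simpa [glueSet, glueMap_apply_boundary] using (Set.ext_iff.mp h i).symm
  · simp [glueSet, glueMap_apply_interior y x ⟨v, hv⟩]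

lemma preimage_boundary_glueMap (X : Set (VF ⊕ {v : VH // v ∉ Set.range x})) :
    x ⁻¹' (glueMap y x ⁻¹' X) = y ⁻¹' (.inl ⁻¹' X) := by
  ext i
  simp [glueMap_apply_boundary]

lemma exists_eq_of_glueMap_eq_inl {v : VH} {a : VF} (h : glueMap y x v = .inl a) :
    ∃ i, v = x i := by
  by_contra hv
  rw [glueMap_apply_interior y x ⟨v, by simpa [eq_comm] using hv⟩] at h
  cases h

variable (hx : ∀ i j, ¬ H.Adj (x i) (x j))
include hx

lemma SimpleGraph.Adj.glueMap {u v : VH} (huv : H.Adj u v) :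
    (BSum F y H x).Adj (glueMap y x u) (glueMap y x v) := by
  by_cases hu : u ∈ Set.range x <;> by_cases hv : v ∈ Set.range x
  · obtain ⟨⟨i, rfl⟩, ⟨j, rfl⟩⟩ := And.intro hu hv
    exact absurd huv (hx i j)
  · obtain ⟨i, rfl⟩ := hu
    rw [glueMap_apply_boundary, glueMap_apply_interior y x ⟨v, hv⟩, bSum_adj_inl_inr]
    exact ⟨i, rfl, huv⟩
  · obtain ⟨j, rfl⟩ := hv
    rw [glueMap_apply_boundary, glueMap_apply_interior y x ⟨u, hu⟩]
    exact ((bSum_adj_inl_inr F H y x).mpr ⟨j, rfl, huv.symm⟩).symm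
  · rw [glueMap_apply_interior y x ⟨u, hu⟩, glueMap_apply_interior y x ⟨v, hv⟩,
      bSum_adj_inr_inr]
    exact huv

lemma mem_edgeSet_bSum {E : Sym2 (VF ⊕ {v : VH // v ∉ Set.range x})} :
    E ∈ (BSum F y H x).edgeSet ↔
      (∃ e ∈ F.edgeSet, Sym2.map .inl e = E) ∨
        ∃ e ∈ H.edgeSet, Sym2.map (glueMap y x) e = E := by
  constructor
  · intro hE
    induction E using Sym2.ind with
    | _ c d =>
      rw [mem_edgeSet] at hE
      rcases c with a | a <;> rcases d with b | b
      · exact .inl ⟨s(a, b), (bSum_adj_inl_inl F H y x).mp hE, rfl⟩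
      · obtain ⟨i, rfl, hadj⟩ := (bSum_adj_inl_inr F H y x).mp hE
        exact .inr ⟨s(x i, b.1), hadj, by
          simp [Sym2.map_mk, glueMap_apply_boundary, glueMap_apply_interior]⟩
      · obtain ⟨i, rfl, hadj⟩ := (bSum_adj_inl_inr F H y x).mp hE.symm
        exact .inr ⟨s(a.1, x i), hadj.symm, by
          simp [Sym2.map_mk, glueMap_apply_boundary, glueMap_apply_interior]⟩
      · exact .inr ⟨s(a.1, b.1), (bSum_adj_inr_inr F H y x).mp hE, by
          simp [Sym2.map_mk, glueMap_apply_interior]⟩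
  · rintro (⟨e, he, rfl⟩ | ⟨e, he, rfl⟩) <;> induction e using Sym2.ind
    · exact (bSum_adj_inl_inl F H y x).mpr he
    · exact he.glueMap y x hx

lemma map_glueMap_ne_map_inl {e : Sym2 VH} (he : e ∈ H.edgeSet) (e' : Sym2 VF) :
    Sym2.map (glueMap y x) e ≠ Sym2.map .inl e' := by
  induction e using Sym2.ind with
  | _ u v =>
  induction e' using Sym2.ind with
  | _ a b =>
    intro heq
    rw [Sym2.map_mk, Sym2.map_mk, Sym2.eq_iff] at heq
    obtain ⟨⟨i, rfl⟩, ⟨j, rfl⟩⟩ : (∃ i, u = x i) ∧ ∃ j, v = x j := by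
      rcases heq with ⟨hu, hv⟩ | ⟨hu, hv⟩
      exacts [⟨exists_eq_of_glueMap_eq_inl y x hu, exists_eq_of_glueMap_eq_inl y x hv⟩,
        ⟨exists_eq_of_glueMap_eq_inl y x hu, exists_eq_of_glueMap_eq_inl y x hv⟩]
    exact hx i j he

omit hx in
lemma bSumW_map_inl (wF : Sym2 VF → ℕ) (wH : Sym2 VH → ℕ) (e : Sym2 VF) :
    BSumW wF wH y x (Sym2.map .inl e) = wF e := by
  induction e using Sym2.ind with
  | _ a b => rfl

lemma bSumW_map_glueMap (wF : Sym2 VF → ℕ) (wH : Sym2 VH → ℕ) {e : Sym2 VH}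
    (he : e ∈ H.edgeSet) : BSumW wF wH y x (Sym2.map (glueMap y x) e) = wH e := by
  induction e using Sym2.ind with
  | _ u v =>
    have hsum (i : Fin r) (b : VH) :
        (∑ j, if y j = y i then wH s(x j, b) else 0) = wH s(x i, b) := by
      simp [y.injective.eq_iff]
    by_cases hu : u ∈ Set.range x <;> by_cases hv : v ∈ Set.range x
    · obtain ⟨⟨i, rfl⟩, ⟨j, rfl⟩⟩ := And.intro hu hv
      exact absurd he (hx i j)
    · obtain ⟨i, rfl⟩ := hu
      rw [Sym2.map_mk, glueMap_apply_boundary, glueMap_apply_interior y x ⟨v, hv⟩]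
      exact hsum i v
    · obtain ⟨j, rfl⟩ := hv
      rw [Sym2.map_mk, glueMap_apply_boundary, glueMap_apply_interior y x ⟨u, hu⟩,
        Sym2.eq_swap, Sym2.eq_swap (a := u)]
      exact hsum j u
    · rw [Sym2.map_mk, glueMap_apply_interior y x ⟨u, hu⟩, glueMap_apply_interior y x ⟨v, hv⟩]
      rfl

lemma cutWeight_bSum [Fintype VF] [Fintype VH] [DecidableEq VH] (wF : Sym2 VF → ℕ)
    (wH : Sym2 VH → ℕ) (X : Set (VF ⊕ {v : VH // v ∉ Set.range x})) :
    cutWeight (BSum F y H x) (BSumW wF wH y x) X =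
      cutWeight F wF (.inl ⁻¹' X) + cutWeight H wH (glueMap y x ⁻¹' X) := by
  have hsplit : (BSum F y H x).edgeFinset.filter (Crosses X) =
      (F.edgeFinset.filter (Crosses (.inl ⁻¹' X))).image (Sym2.map .inl) ∪
        (H.edgeFinset.filter (Crosses (glueMap y x ⁻¹' X))).image (Sym2.map (glueMap y x)) := by
    ext E
    simp only [Finset.mem_filter, Finset.mem_union, Finset.mem_image, mem_edgeFinset,
      mem_edgeSet_bSum y x hx]
    constructor
    · rintro ⟨⟨e, he, rfl⟩ | ⟨e, he, rfl⟩, hX⟩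
      exacts [.inl ⟨e, ⟨he, crosses_map _ |>.mp hX⟩, rfl⟩,
        .inr ⟨e, ⟨he, crosses_map _ |>.mp hX⟩, rfl⟩]
    · rintro (⟨e, ⟨he, hX⟩, rfl⟩ | ⟨e, ⟨he, hX⟩, rfl⟩)
      exacts [⟨.inl ⟨e, he, rfl⟩, crosses_map _ |>.mpr hX⟩,
        ⟨.inr ⟨e, he, rfl⟩, crosses_map _ |>.mpr hX⟩]
  have hdisj : Disjoint ((F.edgeFinset.filter (Crosses (.inl ⁻¹' X))).image (Sym2.map .inl))
      ((H.edgeFinset.filter (Crosses (glueMap y x ⁻¹' X))).image (Sym2.map (glueMap y x))) := by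
    simp only [Finset.disjoint_left, Finset.mem_image, Finset.mem_filter, mem_edgeFinset]
    rintro _ ⟨e, -, rfl⟩ ⟨e', ⟨he', -⟩, heq⟩
    exact map_glueMap_ne_map_inl y x hx he' e heq
  rw [cutWeight, hsplit, Finset.sum_union hdisj,
    Finset.sum_image fun _ _ _ _ h => Sym2.map.injective Sum.inl_injective h,
    Finset.sum_image fun _ _ _ _ h => Sym2.map.injective (glueMap_injective y x) h]
  congr 1
  · exact Finset.sum_congr rfl fun e _ => bSumW_map_inl y x wF wH e
  · refine Finset.sum_congr rfl fun e he => bSumW_map_glueMap y x hx wF wH ?_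
    exact mem_edgeFinset.mp (Finset.mem_filter.mp he).1

end BoundarySum

section CutRefines

variable {r : ℕ} {V V' : Type*} [Fintype V] [Fintype V']

/-- `Z'` can replace `Z` in any cut of a boundary sum: it has the same boundary trace, it is
no heavier, and it keeps an interior vertex on each side where `Z` needs one to make the cut
nontrivial. -/
def CutRefines (H : SimpleGraph V) (w : Sym2 V → ℕ) (x : Fin r ↪ V)
    (H' : SimpleGraph V') (w' : Sym2 V' → ℕ) (x' : Fin r ↪ V') (Z : Set V) (Z' : Set V') :
    Prop :=
  x' ⁻¹' Z' = x ⁻¹' Z ∧ cutWeight H' w' Z' ≤ cutWeight H w Z ∧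
    (x ⁻¹' Z = ∅ → (Z \ Set.range x).Nonempty → (Z' \ Set.range x').Nonempty) ∧
    (x ⁻¹' Z = Set.univ → (Zᶜ \ Set.range x).Nonempty → (Z'ᶜ \ Set.range x').Nonempty)

variable {H : SimpleGraph V} {w : Sym2 V → ℕ} {x : Fin r ↪ V}
  {H' : SimpleGraph V'} {w' : Sym2 V' → ℕ} {x' : Fin r ↪ V'} {Z : Set V} {Z' : Set V'}

lemma CutRefines.compl (h : CutRefines H w x H' w' x' Z Z') :
    CutRefines H w x H' w' x' Zᶜ Z'ᶜ := by
  obtain ⟨htr, hcut, h₁, h₂⟩ := h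
  refine ⟨by simp only [Set.preimage_compl, htr], by rwa [cutWeight_compl, cutWeight_compl],
    fun h hZ => ?_, fun h hZ => ?_⟩
  · exact h₂ (by simpa [Set.preimage_compl] using h) hZ
  · rw [compl_compl] at hZ ⊢
    exact h₁ (by simpa [Set.preimage_compl] using h) hZ

variable {VF : Type*} (y : Fin r ↪ VF)

lemma nonempty_glueSet_of_cutRefines {X : Set (VF ⊕ {v : V // v ∉ Set.range x})}
    (hX : X.Nonempty) (h : CutRefines H w x H' w' x' (glueMap y x ⁻¹' X) Z') :
    (glueSet x' (.inl ⁻¹' X) Z').Nonempty := by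
  by_cases hF : ∃ a, Sum.inl a ∈ X
  · obtain ⟨a, ha⟩ := hF
    exact ⟨.inl a, ha⟩
  push Not at hF
  obtain ⟨_ | b, hb⟩ := hX
  · exact absurd hb (hF _)
  have htr : x ⁻¹' (glueMap y x ⁻¹' X) = ∅ := by
    rw [preimage_boundary_glueMap]
    exact Set.eq_empty_of_forall_notMem fun i => hF (y i)
  obtain ⟨v, hvZ, hv⟩ := h.2.2.1 htr ⟨b.1, by simpa [glueMap_apply_interior] using hb, b.2⟩
  exact ⟨.inr ⟨v, hv⟩, hvZ⟩

lemma weightConn_bSum_le_of_cutRefines [DecidableEq V] [DecidableEq V'] [Fintype VF]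
    [Nonempty VF] (F : SimpleGraph VF) (wF : Sym2 VF → ℕ) (hx : ∀ i j, ¬ H.Adj (x i) (x j))
    (hx' : ∀ i j, ¬ H'.Adj (x' i) (x' j))
    (h : ∀ Z : Set V, ∃ Z' : Set V', CutRefines H w x H' w' x' Z Z') :
    weightConn (BSum F y H' x') (BSumW wF w' y x') ≤
      weightConn (BSum F y H x) (BSumW wF w y x) := by
  refine weightConn_le_of_forall_cutWeight _ _ fun X hX hXc => ?_
  obtain ⟨Z', hZ'⟩ := h (glueMap y x ⁻¹' X)
  have hglue : glueMap y x' ⁻¹' glueSet x' (.inl ⁻¹' X) Z' = Z' :=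
    preimage_glueMap_glueSet y x' (hZ'.1.trans (preimage_boundary_glueMap y x X))
  refine ⟨_, nonempty_glueSet_of_cutRefines y hX hZ', ?_, ?_⟩
  · rw [compl_glueSet]
    exact nonempty_glueSet_of_cutRefines y hXc hZ'.compl
  · rw [cutWeight_bSum y x' hx', cutWeight_bSum y x hx, hglue]
    exact Nat.add_le_add_left hZ'.2.1 _

end CutRefines

section BoundaryQuotient

variable {r : ℕ} {V V' : Type*} {H : SimpleGraph V} {x : Fin r ↪ V} {x' : Fin r ↪ V'}
  {φ : V → V'} (hφx : ∀ i, φ (x i) = x' i) (hφint : ∀ v, φ v ∈ Set.range x' → v ∈ Set.range x)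

include hφx

lemma preimage_boundary_preimage (A' : Set V') : x ⁻¹' (φ ⁻¹' A') = x' ⁻¹' A' := by
  ext i
  simp [hφx]

lemma nonempty_preimage_diff_range (hφ : Function.Surjective φ) {A' : Set V'}
    (hA' : (A' \ Set.range x').Nonempty) : (φ ⁻¹' A' \ Set.range x).Nonempty := by
  obtain ⟨_, hv, hvx⟩ := hA'
  obtain ⟨v, rfl⟩ := hφ ‹_›
  refine ⟨v, hv, ?_⟩
  rintro ⟨i, rfl⟩
  exact hvx ⟨i, (hφx i).symm⟩

include hφint

lemma ProperB.imageGraph (hx : ProperB H x) (hφ : Function.Surjective φ) :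
    ProperB (imageGraph H φ) x' := by
  refine ⟨fun i j hij => ?_, fun v' => ?_⟩
  · obtain ⟨-, u, v, huv, hu, hv⟩ := imageGraph_adj.mp hij
    obtain ⟨k, rfl⟩ := hφint u ⟨i, hu.symm⟩
    obtain ⟨l, rfl⟩ := hφint v ⟨j, hv.symm⟩
    exact hx.1 k l huv
  · obtain ⟨v, rfl⟩ := hφ v'
    obtain ⟨i, hi⟩ := hx.2 v
    exact ⟨i, hφx i ▸ hi.imageGraph⟩

omit hφx in
lemma nonempty_diff_range_of_preimage_eq {A : Set V} {A' : Set V'} (h : φ ⁻¹' A' = A)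
    (hA : (A \ Set.range x).Nonempty) : (A' \ Set.range x').Nonempty := by
  obtain ⟨v, hv, hvx⟩ := hA
  exact ⟨φ v, (h.symm ▸ hv : v ∈ φ ⁻¹' A'), fun h' => hvx (hφint v h')⟩

variable [Fintype V] [Fintype V'] {w : Sym2 V → ℕ}

omit hφint in
lemma cutRefines_preimage (hφ : Function.Surjective φ) (W' : Set V') :
    CutRefines (imageGraph H φ) (imageWeight H w φ) x' H w x W' (φ ⁻¹' W') :=
  ⟨preimage_boundary_preimage hφx W', (cutWeight_imageGraph w W').ge,
    fun _ hW' => nonempty_preimage_diff_range hφx hφ hW',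
    fun _ hW' => nonempty_preimage_diff_range hφx hφ hW'⟩

lemma CutRefines.image {Z W : Set V} (hW : CutRefines H w x H w x Z W)
    (hsat : φ ⁻¹' (φ '' W) = W) :
    CutRefines H w x (imageGraph H φ) (imageWeight H w φ) x' Z (φ '' W) := by
  obtain ⟨htr, hcut, h₁, h₂⟩ := hW
  refine ⟨?_, ?_, fun h hZ => ?_, fun h hZ => ?_⟩
  · rw [← preimage_boundary_preimage hφx, hsat, htr]
  · rwa [cutWeight_imageGraph, hsat]
  · exact nonempty_diff_range_of_preimage_eq hφint hsat (h₁ h hZ)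
  · exact nonempty_diff_range_of_preimage_eq hφint (by rw [Set.preimage_compl, hsat])
      (h₂ h hZ)

end BoundaryQuotient

def IsSaturated {r : ℕ} {V S : Type*} {x : Fin r ↪ V} (σ : {v : V // v ∉ Set.range x} → S)
    (R : Set V) : Prop :=
  ∀ u v, σ u = σ v → (u.1 ∈ R ↔ v.1 ∈ R)

lemma IsSaturated.compl {r : ℕ} {V S : Type*} {x : Fin r ↪ V}
    {σ : {v : V // v ∉ Set.range x} → S} {R : Set V} (h : IsSaturated σ R) :
    IsSaturated σ Rᶜ :=
  fun u v huv => not_congr (h u v huv)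

section Collapse

variable {r : ℕ} {V S : Type*} [Fintype V] (x : Fin r ↪ V) (σ : {v : V // v ∉ Set.range x} → S)

noncomputable def collapse (v : V) : Fin (r + Fintype.card (Set.range σ)) :=
  if h : v ∈ Set.range x then Fin.castAddEmb _ h.choose
  else Fin.natAdd r (Fintype.equivFin _ ⟨σ ⟨v, h⟩, _, rfl⟩)

lemma collapse_apply_boundary (i : Fin r) : collapse x σ (x i) = Fin.castAddEmb _ i := by
  have h : x i ∈ Set.range x := ⟨i, rfl⟩
  rw [collapse, dif_pos h, x.injective h.choose_spec]

lemma collapse_apply_interior (v : {v : V // v ∉ Set.range x}) :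
    collapse x σ v.1 = Fin.natAdd r (Fintype.equivFin _ ⟨σ v, v, rfl⟩) :=
  dif_neg v.2

lemma mem_range_of_collapse_mem_range (v : V)
    (h : collapse x σ v ∈ Set.range (Fin.castAddEmb _)) : v ∈ Set.range x := by
  by_contra hv
  obtain ⟨i, hi⟩ := h
  rw [collapse_apply_interior x σ ⟨v, hv⟩] at hi
  have := congrArg Fin.val hi
  simp only [Fin.castAddEmb_apply, Fin.val_castAdd, Fin.val_natAdd] at this
  omega

lemma collapse_surjective : Function.Surjective (collapse x σ) := by
  refine Fin.addCases (fun i => ⟨x i, collapse_apply_boundary x σ i⟩) fun j => ?_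
  obtain ⟨v, hv⟩ := ((Fintype.equivFin (Set.range σ)).symm j).2
  refine ⟨v.1, ?_⟩
  rw [collapse_apply_interior, show (⟨σ v, v, rfl⟩ : Set.range σ) = _ from Subtype.ext hv,
    Equiv.apply_symm_apply]

lemma preimage_image_collapse {R : Set V} (hR : IsSaturated σ R) :
    collapse x σ ⁻¹' (collapse x σ '' R) = R := by
  refine Set.Subset.antisymm (fun v ⟨u, hu, huv⟩ => ?_) (Set.subset_preimage_image _ _)
  by_cases hux : u ∈ Set.range x
  · obtain ⟨i, rfl⟩ := hux
    obtain ⟨j, rfl⟩ := mem_range_of_collapse_mem_range x σ v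
      ⟨i, by rw [← huv, collapse_apply_boundary]⟩
    rw [collapse_apply_boundary, collapse_apply_boundary,
      (Fin.castAddEmb _).injective.eq_iff] at huv
    exact huv ▸ hu
  · have hvx : v ∉ Set.range x := fun hv =>
      hux (mem_range_of_collapse_mem_range x σ u (huv ▸ (by
        obtain ⟨j, rfl⟩ := hv
        exact ⟨j, (collapse_apply_boundary x σ j).symm⟩)))
    rw [collapse_apply_interior x σ ⟨u, hux⟩, collapse_apply_interior x σ ⟨v, hvx⟩] at huv
    have hσ := congrArg Subtype.val ((Fintype.equivFin _).injective ((Fin.natAdd_inj r).mp huv))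
    exact (hR _ _ hσ).mp hu

lemma card_range_le [Fintype S] : Fintype.card (Set.range σ) ≤ Fintype.card S :=
  Fintype.card_le_of_injective _ Subtype.val_injective

end Collapse

/-- Boundary traces containing index `0`; up to complement every trace is one of them. -/
abbrev PinnedTrace (r : ℕ) := {A : Set (Fin r) // ∀ i : Fin r, (i : ℕ) = 0 → i ∈ A}

lemma card_pinnedTrace_le (r : ℕ) : Fintype.card (PinnedTrace r) ≤ 2 ^ (r - 1) := by
  cases r with
  | zero => exact (Fintype.card_subtype_le _).trans (by simp)
  | succ k =>
    refine (Fintype.card_le_of_injective (fun A : PinnedTrace (k + 1) => Fin.succ ⁻¹' A.1)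
      fun A B hAB => Subtype.ext (Set.ext fun i => ?_)).trans (by simp [Fintype.card_set])
    induction i using Fin.cases with
    | zero => exact iff_of_true (A.2 0 rfl) (B.2 0 rfl)
    | succ j => exact Set.ext_iff.mp hAB j

section Signature

variable {r : ℕ} {V : Type*} [Fintype V] (H : SimpleGraph V) (w : Sym2 V → ℕ) (x : Fin r ↪ V)

def compUnion (A : Set (Fin r)) : Set V := {v | ∃ i ∈ A, H.Reachable v (x i)}

def IsCompClosed (A : Set (Fin r)) : Prop := ∀ i j, H.Reachable (x i) (x j) → i ∈ A → j ∈ A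

/-- On component-closed traces we take the union of the components rather than an arbitrary
lightest set, so that signatures separate components. -/
noncomputable def minTraceCut (A : Set (Fin r)) : Set V :=
  if IsCompClosed H x A then compUnion H x A else minCutSet H w (fun Z => x ⁻¹' Z = A)

def IsInteriorPart (c : H.ConnectedComponent) (Y : Set V) : Prop :=
  Y ⊆ c.supp ∧ Y.Nonempty ∧ Disjoint Y (Set.range x)

noncomputable def interiorMinCut (c : H.ConnectedComponent) : Set V :=
  minCutSet H w (IsInteriorPart H x c)

noncomputable def interiorMinCuts : Set V :=
  {v | v ∈ interiorMinCut H w x (H.connectedComponentMk v)}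

noncomputable def signatureSet (A : Set (Fin r)) : Set V :=
  if A = Set.univ then interiorMinCuts H w x else minTraceCut H w x A

def signature (v : {v : V // v ∉ Set.range x}) : PinnedTrace r → Prop :=
  fun A => v.1 ∈ signatureSet H w x A.1

variable {H w x}

omit [Fintype V] in
lemma preimage_compUnion {A : Set (Fin r)} (hA : IsCompClosed H x A) :
    x ⁻¹' compUnion H x A = A :=
  Set.ext fun j => ⟨fun ⟨i, hi, hji⟩ => hA i j hji.symm hi, fun hj => ⟨j, hj, .rfl⟩⟩

lemma cutWeight_compUnion (A : Set (Fin r)) : cutWeight H w (compUnion H x A) = 0 :=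
  cutWeight_eq_zero_of_closed H w fun _ _ huv ⟨i, hi, hui⟩ => ⟨i, hi, huv.symm.reachable.trans hui⟩

lemma preimage_minTraceCut (A : Set (Fin r)) : x ⁻¹' minTraceCut H w x A = A := by
  unfold minTraceCut
  split_ifs with hA
  · exact preimage_compUnion hA
  · exact minCutSet_spec (P := fun Z => x ⁻¹' Z = A) (Y := x '' A) (x.injective.preimage_image A)

lemma cutWeight_minTraceCut_le {A : Set (Fin r)} {Z : Set V} (hZ : x ⁻¹' Z = A) :
    cutWeight H w (minTraceCut H w x A) ≤ cutWeight H w Z := by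
  unfold minTraceCut
  split_ifs
  · simp [cutWeight_compUnion]
  · exact cutWeight_minCutSet_le hZ

lemma interiorMinCut_subset (c : H.ConnectedComponent) : interiorMinCut H w x c ⊆ c.supp := by
  by_cases h : ∃ Y, IsInteriorPart H x c Y
  · exact (minCutSet_spec (P := IsInteriorPart H x c) h.choose_spec).1
  · simp [interiorMinCut, minCutSet_of_not_exists h]

lemma disjoint_interiorMinCut (c : H.ConnectedComponent) :
    Disjoint (interiorMinCut H w x c) (Set.range x) := by
  by_cases h : ∃ Y, IsInteriorPart H x c Y
  · exact (minCutSet_spec (P := IsInteriorPart H x c) h.choose_spec).2.2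
  · simp [interiorMinCut, minCutSet_of_not_exists h]

lemma interiorMinCut_nonempty {c : H.ConnectedComponent} {v : V} (hv : v ∈ c.supp)
    (hvx : v ∉ Set.range x) : (interiorMinCut H w x c).Nonempty :=
  (minCutSet_spec (P := IsInteriorPart H x c) (Y := {v})
    ⟨by simpa using hv, Set.singleton_nonempty v, Set.disjoint_singleton_left.mpr hvx⟩).2.1

lemma cutWeight_interiorMinCut_le {c : H.ConnectedComponent} {Y : Set V} (hY : Y ⊆ c.supp)
    (hYne : Y.Nonempty) (hYx : Disjoint Y (Set.range x)) :
    cutWeight H w (interiorMinCut H w x c) ≤ cutWeight H w Y :=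
  cutWeight_minCutSet_le (P := IsInteriorPart H x c) ⟨hY, hYne, hYx⟩

lemma interiorMinCuts_inter_supp (c : H.ConnectedComponent) :
    interiorMinCuts H w x ∩ c.supp = interiorMinCut H w x c := by
  ext v
  refine ⟨fun ⟨hv, hvc⟩ => ?_, fun hv => ?_⟩
  · rwa [← (ConnectedComponent.mem_supp_iff c v).mp hvc]
  · have hvc := interiorMinCut_subset c hv
    refine ⟨?_, hvc⟩
    rwa [interiorMinCuts, Set.mem_ofPred_eq, (ConnectedComponent.mem_supp_iff c v).mp hvc]

lemma exists_pinnedTrace_separating (hx : ProperB H x) {a b : V}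
    (hb : ∀ i : Fin r, (i : ℕ) = 0 → ¬ H.Reachable b (x i)) (hab : ¬ H.Reachable a b) :
    ∃ A : PinnedTrace r, a ∈ signatureSet H w x A.1 ∧ b ∉ signatureSet H w x A.1 := by
  set A : Set (Fin r) := {i | (∃ j : Fin r, (j : ℕ) = 0 ∧ H.Reachable (x i) (x j)) ∨
    H.Reachable (x i) a}
  have hclosed : IsCompClosed H x A := fun i j hij hi => hi.imp
    (fun ⟨k, hk, hik⟩ => ⟨k, hk, hij.symm.trans hik⟩) hij.symm.trans
  have hbA : b ∉ compUnion H x A := by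
    rintro ⟨i, ⟨j, hj, hij⟩ | hia, hbi⟩
    exacts [hb j hj (hbi.trans hij), hab (hbi.trans hia).symm]
  have hAu : A ≠ Set.univ := fun hA => by
    obtain ⟨i, hbi⟩ := hx.2 b
    exact hbA ⟨i, hA ▸ Set.mem_univ i, hbi⟩
  have hset : signatureSet H w x A = compUnion H x A := by
    rw [signatureSet, if_neg hAu, minTraceCut, if_pos hclosed]
  obtain ⟨i, hai⟩ := hx.2 a
  refine ⟨⟨A, fun j hj => .inl ⟨j, hj, .rfl⟩⟩, ?_, ?_⟩ <;> rw [hset]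
  · exact ⟨i, .inr hai.symm, hai⟩
  · exact hbA

lemma connectedComponentMk_eq_of_signature_eq (hx : ProperB H x)
    {u v : {v : V // v ∉ Set.range x}} (h : signature H w x u = signature H w x v) :
    H.connectedComponentMk u.1 = H.connectedComponentMk v.1 := by
  refine ConnectedComponent.sound (by_contra fun huv => ?_)
  have hsep (a b : {v : V // v ∉ Set.range x}) (hab : signature H w x a = signature H w x b)
      (hb : ∀ i : Fin r, (i : ℕ) = 0 → ¬ H.Reachable b.1 (x i)) (hab' : ¬ H.Reachable a.1 b.1) :
      False := by
    obtain ⟨A, ha, hb⟩ := exists_pinnedTrace_separating (w := w) hx hb hab'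
    exact hb ((Iff.of_eq (congrFun hab A)).mp ha)
  by_cases hv : ∀ i : Fin r, (i : ℕ) = 0 → ¬ H.Reachable v.1 (x i)
  · exact hsep u v h hv huv
  · push Not at hv
    obtain ⟨i, hi, hvi⟩ := hv
    refine hsep v u h.symm (fun j hj hui => huv (hui.trans ?_)) (fun hvu => huv hvu.symm)
    rw [show j = i from Fin.ext (hj.trans hi.symm)]
    exact hvi.symm

lemma isSaturated_interiorMinCut (hx : ProperB H x) (c : H.ConnectedComponent) :
    IsSaturated (signature H w x) (interiorMinCut H w x c) := by
  intro u v h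
  have hall : ∀ v : {v : V // v ∉ Set.range x},
      v.1 ∈ interiorMinCut H w x c ↔ signature H w x v ⟨Set.univ, fun _ _ => trivial⟩ ∧
        H.connectedComponentMk v.1 = c := fun v => by
    rw [← interiorMinCuts_inter_supp, signature, signatureSet, if_pos rfl]
    rfl
  rw [hall, hall, h, connectedComponentMk_eq_of_signature_eq hx h]

lemma cutRefines_compl_interiorMinCut (hx : ProperB H x) {Z : Set V}
    (hZ : x ⁻¹' Z = Set.univ) {v : V} (hvZ : v ∉ Z) (hvx : v ∉ Set.range x) :
    CutRefines H w x H w x Z (interiorMinCut H w x (H.connectedComponentMk v))ᶜ := by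
  set c := H.connectedComponentMk v
  have hdisj := disjoint_interiorMinCut (w := w) (x := x) c
  have hZx : Set.range x ⊆ Z := by
    rintro _ ⟨i, rfl⟩
    exact (Set.ext_iff.mp hZ i).mpr trivial
  refine ⟨?_, ?_, fun hZ' _ => ?_, fun _ _ => ?_⟩
  · ext i
    simp [hZ, Set.disjoint_right.mp hdisj ⟨i, rfl⟩]
  · rw [cutWeight_compl, ← cutWeight_compl H w Z]
    refine (cutWeight_interiorMinCut_le Set.inter_subset_right ⟨v, hvZ, rfl⟩ ?_).trans
      (cutWeight_inter_le_of_closed H w Zᶜ fun a b hab ha => ?_)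
    · exact Set.disjoint_left.mpr fun u hu hux => hu.1 (hZx hux)
    · exact (ConnectedComponent.sound hab.symm.reachable).trans ha
  · obtain ⟨i, -⟩ := hx.2 v
    exact ((Set.ext_iff.mp (hZ'.symm.trans hZ) i).mpr trivial).elim
  · obtain ⟨u, hu⟩ := interiorMinCut_nonempty (w := w) (rfl : v ∈ c.supp) hvx
    exact ⟨u, by simpa using hu, Set.disjoint_left.mp hdisj hu⟩

lemma exists_cutRefines_of_pinned (hx : ProperB H x) {Z : Set V}
    (hZ : ∀ i : Fin r, (i : ℕ) = 0 → x i ∈ Z) :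
    ∃ W : Set V, IsSaturated (signature H w x) W ∧ CutRefines H w x H w x Z W := by
  by_cases hA : x ⁻¹' Z = Set.univ
  · by_cases hout : ∃ v, v ∉ Z ∧ v ∉ Set.range x
    · obtain ⟨v, hvZ, hvx⟩ := hout
      exact ⟨_, (isSaturated_interiorMinCut hx _).compl,
        cutRefines_compl_interiorMinCut hx hA hvZ hvx⟩
    · push Not at hout
      refine ⟨Set.univ, fun _ _ _ => Iff.rfl, by simp [hA], ?_,
        fun _ hZ' => hZ'.mono (Set.sdiff_subset_sdiff_left (Set.subset_univ Z)),
        fun _ ⟨v, hv, hvx⟩ => absurd (hout v hv) hvx⟩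
      rw [cutWeight_eq_zero_of_closed H w (X := Set.univ) fun _ _ _ _ => trivial]
      exact Nat.zero_le _
  · refine ⟨signatureSet H w x (x ⁻¹' Z), fun u v h => Iff.of_eq (congrFun h ⟨_, hZ⟩), ?_⟩
    rw [signatureSet, if_neg hA]
    refine ⟨preimage_minTraceCut _, cutWeight_minTraceCut_le rfl, fun hZ' _ => ?_,
      fun hA' => absurd hA' hA⟩
    obtain ⟨j, -⟩ := (Set.ne_univ_iff_exists_notMem _).mp hA
    have h₀ : (⟨0, j.pos⟩ : Fin r) ∈ x ⁻¹' Z := hZ ⟨0, j.pos⟩ rfl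
    simp [hZ'] at h₀

lemma exists_cutRefines (hx : ProperB H x) (Z : Set V) :
    ∃ W : Set V, IsSaturated (signature H w x) W ∧ CutRefines H w x H w x Z W := by
  by_cases hZ : ∀ i : Fin r, (i : ℕ) = 0 → x i ∈ Z
  · exact exists_cutRefines_of_pinned hx hZ
  · push Not at hZ
    obtain ⟨i, hi, hiZ⟩ := hZ
    obtain ⟨W, hW, hZW⟩ := exists_cutRefines_of_pinned (w := w) hx (Z := Zᶜ) fun j hj =>
      Fin.ext (hj.trans hi.symm) ▸ hiZ
    exact ⟨Wᶜ, hW.compl, compl_compl Z ▸ hZW.compl⟩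

end Signature

section Reach

variable {r p : ℕ} {V V' : Type*} [Fintype V] [Fintype V'] {H : SimpleGraph V}
  {w : Sym2 V → ℕ} {x : Fin r ↪ V}

lemma cutWeight_interiorMinCut_le_of_bdryReach (hreach : BdryReach H w x p)
    {c : H.ConnectedComponent} {u : V} (hu : u ∈ c.supp) (hux : u ∉ Set.range x) :
    cutWeight H w (interiorMinCut H w x c) ≤ p := by
  obtain ⟨v, hv, -, hsep⟩ := hreach c ⟨u, hu, hux⟩
  obtain ⟨Y, hvY, hYv, hYx, hYp⟩ := exists_cutWeight_le_of_sepW_le H w hsep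
  have hYc : Y ⊆ c.supp := fun a ha => (ConnectedComponent.sound (hYv a ha).symm).trans hv
  refine (cutWeight_interiorMinCut_le hYc ⟨v, hvY⟩ ?_).trans (by exact_mod_cast hYp)
  exact Set.disjoint_right.mpr fun a hax haY => hYx a ⟨hax, hYc haY⟩ haY

lemma BdryReach.imageGraph {x' : Fin r ↪ V'} {φ : V → V'} (hreach : BdryReach H w x p)
    (hφx : ∀ i, φ (x i) = x' i) (hφint : ∀ v, φ v ∈ Set.range x' → v ∈ Set.range x)
    (hφ : Function.Surjective φ)
    (hsat : ∀ c, φ ⁻¹' (φ '' interiorMinCut H w x c) = interiorMinCut H w x c) :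
    BdryReach (imageGraph H φ) (imageWeight H w φ) x' p := by
  rintro c' ⟨_, hc', hx'⟩
  obtain ⟨u, rfl⟩ := hφ ‹_›
  have hux : u ∉ Set.range x := fun ⟨i, hi⟩ => hx' ⟨i, hi ▸ (hφx i).symm⟩
  set c := H.connectedComponentMk u
  set Y := interiorMinCut H w x c
  obtain ⟨v, hv⟩ := interiorMinCut_nonempty (w := w) (rfl : u ∈ c.supp) hux
  have hvx : v ∉ Set.range x := Set.disjoint_left.mp (disjoint_interiorMinCut c) hv
  refine ⟨φ v, ?_, fun h => hvx (hφint v h), ?_⟩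
  · have hvu : H.Reachable v u := ConnectedComponent.exact (interiorMinCut_subset c hv)
    exact (ConnectedComponent.sound hvu.imageGraph).trans hc'
  · refine (sepW_le_cutWeight _ _ (X := φ '' Y) ⟨v, hv, rfl⟩ ?_).trans ?_
    · rintro _ ⟨⟨i, rfl⟩, -⟩ hi
      rw [← hφx, ← Set.mem_preimage, hsat] at hi
      exact Set.disjoint_right.mp (disjoint_interiorMinCut c) ⟨i, rfl⟩ hi
    · rw [cutWeight_imageGraph, hsat]
      exact_mod_cast cutWeight_interiorMinCut_le_of_bdryReach hreach (rfl : u ∈ c.supp) hux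

end Reach

lemma card_pinnedTrace_fun_le (r : ℕ) : Fintype.card (PinnedTrace r → Prop) ≤ 2 ^ 2 ^ (r - 1) := by
  rw [Fintype.card_fun, Fintype.card_prop]
  exact Nat.pow_le_pow_right two_pos (card_pinnedTrace_le r)

theorem stmt_8_general {r p : ℕ} {VH : Type*} [Fintype VH]
    (H : SimpleGraph VH) (wH : Sym2 VH → ℕ) (hwH : ∀ e ∈ H.edgeSet, 0 < wH e)
    (x : Fin r ↪ VH) (hx : ProperB H x) (hreach : BdryReach H wH x p) :
    ∃ (n : ℕ) (H' : SimpleGraph (Fin n)) (w' : Sym2 (Fin n) → ℕ) (x' : Fin r ↪ Fin n),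
      n ≤ 2 ^ 2 ^ (r - 1) + r ∧ ProperB H' x' ∧ (∀ e ∈ H'.edgeSet, 0 < w' e) ∧
      (∀ (VF : Type*) [Fintype VF] (F : SimpleGraph VF) (wF : Sym2 VF → ℕ),
        (∀ e ∈ F.edgeSet, 0 < wF e) → ∀ y : Fin r ↪ VF,
        (BSum F ⇑y H ⇑x).Connected →
        weightConn (BSum F ⇑y H ⇑x) (BSumW wF wH ⇑y ⇑x) ≤ (p : ℕ∞) →
        weightConn (BSum F ⇑y H' ⇑x') (BSumW wF w' ⇑y ⇑x') =
          weightConn (BSum F ⇑y H ⇑x) (BSumW wF wH ⇑y ⇑x)) ∧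
      BdryReach H' w' x' p := by
  set σ := signature H wH x
  set φ := collapse x σ
  have hφx : ∀ i, φ (x i) = Fin.castAddEmb _ i := collapse_apply_boundary x σ
  have hφint := mem_range_of_collapse_mem_range x σ
  have hφ := collapse_surjective x σ
  have hsat {W : Set VH} (hW : IsSaturated σ W) : φ ⁻¹' (φ '' W) = W :=
    preimage_image_collapse x σ hW
  have hx' := hx.imageGraph hφx hφint hφ
  refine ⟨_, imageGraph H φ, imageWeight H wH φ, Fin.castAddEmb _, ?_, hx',
    imageWeight_pos wH hwH, ?_, hreach.imageGraph hφx hφint hφ fun c =>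
      hsat (isSaturated_interiorMinCut hx c)⟩
  · have := (card_range_le x σ).trans (card_pinnedTrace_fun_le r)
    omega
  · intro VF _ F wF _ y hconn _
    have : Nonempty VF := by
      obtain ⟨_ | b⟩ := hconn.nonempty
      · exact ⟨‹_›⟩
      · exact ⟨y (hx.2 b.1).choose⟩
    refine le_antisymm (weightConn_bSum_le_of_cutRefines y F wF hx.1 hx'.1 fun Z => ?_)
      (weightConn_bSum_le_of_cutRefines y F wF hx'.1 hx.1 fun W' =>
        ⟨_, cutRefines_preimage hφx hφ W'⟩)
    obtain ⟨W, hW, hZW⟩ := exists_cutRefines hx Z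
    exact ⟨φ '' W, hZW.image hφx hφint (hsat hW)⟩

/-- Let `(H,x)` be a properly `r`-boundaried weighted graph and `p` a positive integer,
and suppose that every component of `H` with a vertex outside the boundary has a vertex
`v` outside the boundary with `λ_H(x ∩ V(C), v) ≤ p`. Then there is a properly
`r`-boundaried weighted graph `(H',x')` with at most `2^{2^{r-1}} + r` vertices such
that (a) for every `r`-boundaried weighted graph `(F,y)`, if `(F,y) ⊕_b (H,x)` is
connected with weighted connectivity at most `p`, then `(F,y) ⊕_b (H',x')` has the same
weighted connectivity; and (b) every component of `H'` with a vertex outside `x'` has a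
vertex `v` outside `x'` with `λ_{H'}(x' ∩ V(C'), v) ≤ p`. -/
theorem stmt_8 {r p : ℕ} (hp : 0 < p) {VH : Type*} [Fintype VH]
    (H : SimpleGraph VH) (wH : Sym2 VH → ℕ) (hwH : ∀ e ∈ H.edgeSet, 0 < wH e)
    (x : Fin r ↪ VH) (hx : ProperB H x) (hreach : BdryReach H wH x p) :
    ∃ (n : ℕ) (H' : SimpleGraph (Fin n)) (w' : Sym2 (Fin n) → ℕ) (x' : Fin r ↪ Fin n),
      n ≤ 2 ^ 2 ^ (r - 1) + r ∧ ProperB H' x' ∧ (∀ e ∈ H'.edgeSet, 0 < w' e) ∧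
      (∀ (VF : Type*) [Fintype VF] (F : SimpleGraph VF) (wF : Sym2 VF → ℕ),
        (∀ e ∈ F.edgeSet, 0 < wF e) → ∀ y : Fin r ↪ VF,
        (BSum F ⇑y H ⇑x).Connected →
        weightConn (BSum F ⇑y H ⇑x) (BSumW wF wH ⇑y ⇑x) ≤ (p : ℕ∞) →
        weightConn (BSum F ⇑y H' ⇑x') (BSumW wF w' ⇑y ⇑x') =
          weightConn (BSum F ⇑y H ⇑x) (BSumW wF wH ⇑y ⇑x)) ∧
      BdryReach H' w' x' p :=
  stmt_8_general H wH hwH x hx hreach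
end

section
/- Let λ ≤ k be positive integers, let G be a weighted graph whose connected components G_1,…,G_s all satisfy λ(G_i) = λ, and let Λ = ⟨λ_1,…,λ_t⟩ be a nondecreasing tuple with entries in ℕ∪{+∞}. Then (G,w,Λ,k) is a yes-instance of CGWC if and only if there exists F ⊆ E(G) with w(F) ≤ k such that, denoting by {j_1,…,j_p} the set of indices j with E(G_j)∩F ≠ ∅, we have p ≤ k, and for each i ∈ {1,…,p} there is a subtuple Λ^i = ⟨λ^i_1,…,λ^i_{t_i}⟩ ⊆ Λ of length t_i such that: (i) t_1+⋯+t_p = t−s+p; (ii) for each i, the graph G_{j_i}−F has exactly t_i connected components C^i_1,…,C^i_{t_i} with λ(C^i_h) ≥ λ^i_h for every h; and (iii) Λ ⪯ (s−p)⟨λ⟩ + Λ^1 + ⋯ + Λ^p. -/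
open scoped Classical

/-- The weighted connectivity of the subgraph of `(G,w)` induced by the vertex set `C`. -/
noncomputable def compConn {V : Type*} [Fintype V] (G : SimpleGraph V) (w : Sym2 V → ℕ)
    (C : Set V) : ℕ∞ :=
  weightConn (G.induce C) (fun e => w (Sym2.map Subtype.val e))

/-- The multiset of the weighted connectivities of the connected components of `(G,w)`. -/
noncomputable def connMultiset {V : Type*} [Fintype V] (G : SimpleGraph V)
    (w : Sym2 V → ℕ) : Multiset ℕ∞ :=
  (@Finset.univ G.ConnectedComponent (Fintype.ofFinite _)).val.map
    (fun c => compConn G w c.supp)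

/-- `α ⪯ β` for multisets viewed as nondecreasing tuples: the tuples have the same length
and the `i`-th smallest entry of `α` is at most the `i`-th smallest entry of `β`. -/
def DomLE (α β : Multiset ℕ∞) : Prop :=
  List.Forall₂ (· ≤ ·) (α.sort (· ≤ ·)) (β.sort (· ≤ ·))

/-- `(G,w,Λ,k)` is a yes-instance of CGWC: there is `F ⊆ E(G)` with `w(F) ≤ k` such that
`G - F` has exactly `Λ.card` connected components `G_1,…,G_t` with `λ(G_i) ≥ λ_i`
(where `Λ = ⟨λ_1 ≤ … ≤ λ_t⟩`). -/
def IsYes {V : Type*} [Fintype V] (G : SimpleGraph V) (w : Sym2 V → ℕ)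
    (Λ : Multiset ℕ∞) (k : ℕ) : Prop :=
  ∃ F : Finset (Sym2 V), ↑F ⊆ G.edgeSet ∧ (∑ e ∈ F, w e) ≤ k ∧
    DomLE Λ (connMultiset (G.deleteEdges ↑F) w)

/-- The connected component `c` of `G` contains an edge of `F`. -/
def Touched {V : Type*} (G : SimpleGraph V) (F : Finset (Sym2 V))
    (c : G.ConnectedComponent) : Prop :=
  ∃ e ∈ F, ∀ v ∈ e, v ∈ c.supp

/-! Deleting `F` leaves every component of `G` without an edge of `F` intact, as a component of
`G - F` of connectivity `λ`; the other components of `G - F` are those of `G_c - F` for the `p`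
touched components `c`. Hence the multiset of connectivities of `G - F` is
`(s - p)⟨λ⟩ + Σ_c (connectivities of G_c - F)`. For sorted tuples, `Λ ⪯ β` is equivalent to the
existence of a `≤`-matching between the multisets (an exchange argument), and such a matching
of `Λ` into a sum splits into matchings of subtuples `Λ^c` into the summands. Finally `p ≤ w(F)`,
since distinct touched components contain distinct edges of `F`, each of weight at least `1`. -/

theorem List.Forall₂.multisetRel {α β : Type*} {r : α → β → Prop} {l₁ : List α}
    {l₂ : List β} (h : List.Forall₂ r l₁ l₂) : Multiset.Rel r l₁ l₂ := by
  induction h with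
  | nil => exact Multiset.Rel.zero
  | cons hab _ ih => exact Multiset.Rel.cons hab ih

namespace Multiset

variable {α : Type*}

theorem Rel.of_cons_cons_of_forall_le [Preorder α] {x y : α} {s t : Multiset α}
    (h : Rel (· ≤ ·) (x ::ₘ s) (y ::ₘ t)) (hx : ∀ a ∈ s, x ≤ a) (hy : ∀ b ∈ t, y ≤ b) :
    x ≤ y ∧ Rel (· ≤ ·) s t := by
  obtain ⟨b, t', hxb, hst', hyt⟩ := rel_cons_left.mp h
  rcases cons_eq_cons.mp hyt with ⟨rfl, rfl⟩ | ⟨-, u, rfl, rfl⟩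
  · exact ⟨hxb, hst'⟩
  · obtain ⟨a, s', hay, hs'u, rfl⟩ := rel_cons_right.mp hst'
    exact ⟨(hx a (mem_cons_self a s')).trans hay,
      Rel.cons (hay.trans (hy b (mem_cons_self b u))) hs'u⟩

theorem forall₂_of_rel_of_pairwise [Preorder α] {l₁ l₂ : List α}
    (h₁ : l₁.Pairwise (· ≤ ·)) (h₂ : l₂.Pairwise (· ≤ ·)) (h : Rel (· ≤ ·) (l₁ : Multiset α) l₂) :
    List.Forall₂ (· ≤ ·) l₁ l₂ := by
  induction l₁ generalizing l₂ with
  | nil =>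
    obtain rfl : l₂ = [] := by simpa using rel_zero_left.mp h
    exact List.Forall₂.nil
  | cons x l₁ ih =>
    cases l₂ with
    | nil => simpa using card_eq_card_of_rel h
    | cons y l₂ =>
      rw [List.pairwise_cons] at h₁ h₂
      obtain ⟨hxy, hrel⟩ := Rel.of_cons_cons_of_forall_le h
        (fun a ha => h₁.1 a (mem_coe.mp ha)) (fun b hb => h₂.1 b (mem_coe.mp hb))
      exact List.Forall₂.cons hxy (ih h₁.2 h₂.2 hrel)

theorem Rel.finset_sum {ι β : Type*} {r : α → β → Prop} {s : Finset ι}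
    {f : ι → Multiset α} {g : ι → Multiset β} (h : ∀ i ∈ s, Rel r (f i) (g i)) :
    Rel r (∑ i ∈ s, f i) (∑ i ∈ s, g i) := by
  induction s using Finset.induction_on with
  | empty => exact Rel.zero
  | insert i s hi ih =>
    rw [Finset.sum_insert hi, Finset.sum_insert hi]
    exact (h i (s.mem_insert_self i)).add (ih fun j hj => h j (Finset.mem_insert_of_mem hj))

theorem exists_eq_sum_of_rel_finset_sum {ι β : Type*} {r : α → β → Prop} {s : Finset ι}
    {Λ : Multiset α} {g : ι → Multiset β} (h : Rel r Λ (∑ i ∈ s, g i)) :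
    ∃ f : ι → Multiset α, Λ = ∑ i ∈ s, f i ∧ ∀ i ∈ s, Rel r (f i) (g i) := by
  classical
  induction s using Finset.induction_on generalizing Λ with
  | empty => exact ⟨0, by simpa using h, by simp⟩
  | insert i s hi ih =>
    rw [Finset.sum_insert hi, rel_add_right] at h
    obtain ⟨Λi, Λs, hΛi, hΛs, rfl⟩ := h
    obtain ⟨f, rfl, hf⟩ := ih hΛs
    refine ⟨Function.update f i Λi, ?_, ?_⟩
    · rw [Finset.sum_insert hi, Function.update_self, Finset.sum_update_of_notMem hi]
    · intro j hj
      rcases Finset.mem_insert.mp hj with rfl | hj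
      · simpa using hΛi
      · rw [Function.update_of_ne (ne_of_mem_of_not_mem hj hi)]
        exact hf j hj

theorem rel_add_sum_iff [Preorder α] {ι : Type*} [Fintype ι] (Λ A : Multiset α)
    (M : ι → Multiset α) :
    Rel (· ≤ ·) Λ (A + ∑ i, M i) ↔
      ∃ Λs : ι → Multiset α, (∀ i, Λs i ≤ Λ) ∧ ∑ i, card (Λs i) + card A = card Λ ∧
        (∀ i, Rel (· ≤ ·) (Λs i) (M i)) ∧ Rel (· ≤ ·) Λ (A + ∑ i, Λs i) := by
  constructor
  · intro h
    obtain ⟨Λ₀, Λ₁, hΛ₀, hΛ₁, rfl⟩ := rel_add_right.mp h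
    obtain ⟨Λs, rfl, hΛs⟩ := exists_eq_sum_of_rel_finset_sum hΛ₁
    refine ⟨Λs, fun i => ?_, ?_, fun i => hΛs i (Finset.mem_univ i),
      hΛ₀.add (rel_refl_of_refl_on fun a _ => le_refl a)⟩
    · exact (Finset.single_le_sum (fun j _ => zero_le (Λs j)) (Finset.mem_univ i)).trans
        le_add_self
    · rw [card_add, card_sum, card_eq_card_of_rel hΛ₀, add_comm]
  · rintro ⟨Λs, -, -, hΛs, h⟩
    exact h.trans _ ((rel_refl_of_refl_on fun a _ => le_refl a).add
      (Rel.finset_sum fun i _ => hΛs i))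

end Multiset

theorem domLE_iff_rel (α β : Multiset ℕ∞) : DomLE α β ↔ Multiset.Rel (· ≤ ·) α β := by
  constructor
  · intro h
    simpa only [Multiset.sort_eq] using h.multisetRel
  · intro h
    exact Multiset.forall₂_of_rel_of_pairwise (Multiset.pairwise_sort _ _)
      (Multiset.pairwise_sort _ _) (by simpa only [Multiset.sort_eq] using h)

namespace SimpleGraph

def Iso.deleteEdges {V₁ V₂ : Type*} {G₁ : SimpleGraph V₁} {G₂ : SimpleGraph V₂}
    (φ : G₁ ≃g G₂) {S₁ : Set (Sym2 V₁)} {S₂ : Set (Sym2 V₂)}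
    (hS : ∀ e, Sym2.map φ e ∈ S₂ ↔ e ∈ S₁) :
    G₁.deleteEdges S₁ ≃g G₂.deleteEdges S₂ where
  toEquiv := φ.toEquiv
  map_rel_iff' {a b} := by
    simp only [deleteEdges_adj]
    exact and_congr φ.map_adj_iff (not_congr (hS s(a, b)))

variable {V : Type*}

noncomputable def induceInduceIso (G : SimpleGraph V) (A : Set V) (B : Set A) :
    (G.induce A).induce B ≃g G.induce (Subtype.val '' B) where
  toEquiv := Equiv.Set.image Subtype.val B Subtype.val_injective
  map_rel_iff' := by simp [Equiv.Set.image, Equiv.Set.imageOfInjOn]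

theorem Reachable.induce_of_adj_closed {G : SimpleGraph V} {s : Set V}
    (hs : ∀ ⦃x y⦄, G.Adj x y → x ∈ s → y ∈ s) {u v : V} (hu : u ∈ s) (hv : v ∈ s)
    (h : G.Reachable u v) : (G.induce s).Reachable ⟨u, hu⟩ ⟨v, hv⟩ := by
  obtain ⟨p⟩ := h
  induction p with
  | nil => rfl
  | cons hadj _ ih =>
    have hx := hs hadj hu
    exact (show (G.induce s).Adj ⟨_, hu⟩ ⟨_, hx⟩ from hadj).reachable.trans (ih hx hv)

theorem ConnectedComponent.adj_closed_supp {G H : SimpleGraph V} (hHG : H ≤ G)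
    (c : G.ConnectedComponent) : ∀ ⦃x y⦄, H.Adj x y → x ∈ c.supp → y ∈ c.supp :=
  fun _ _ hxy hx => c.mem_supp_of_adj_mem_supp hx (hHG hxy)

namespace ConnectedComponent

variable {G H : SimpleGraph V}

def ofInduceSupp (c : G.ConnectedComponent) (d : (H.induce c.supp).ConnectedComponent) :
    H.ConnectedComponent :=
  d.map (Embedding.induce c.supp).toHom

theorem ofInduceSupp_mk (c : G.ConnectedComponent) (v : c.supp) :
    ofInduceSupp c ((H.induce c.supp).connectedComponentMk v) = H.connectedComponentMk v :=
  rfl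

theorem map_ofLE_ofInduceSupp (hHG : H ≤ G) (c : G.ConnectedComponent)
    (d : (H.induce c.supp).ConnectedComponent) :
    (ofInduceSupp c d).map (Hom.ofLE hHG) = c :=
  d.ind fun v => v.2

theorem supp_ofInduceSupp (hHG : H ≤ G) (c : G.ConnectedComponent)
    (d : (H.induce c.supp).ConnectedComponent) :
    (ofInduceSupp c d).supp = Subtype.val '' d.supp := by
  induction d using ConnectedComponent.ind with | h u =>
  ext x
  simp only [ofInduceSupp_mk, mem_supp_iff, Set.mem_image]
  constructor
  · intro hx
    have hxu : H.Reachable x u := ConnectedComponent.exact hx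
    have hxc : x ∈ c.supp := (mem_supp_iff c x).mpr <|
      (ConnectedComponent.sound (hxu.mono hHG)).trans u.2
    exact ⟨⟨x, hxc⟩, ConnectedComponent.sound
      (hxu.induce_of_adj_closed (c.adj_closed_supp hHG) hxc u.2), rfl⟩
  · rintro ⟨y, hy, rfl⟩
    exact ConnectedComponent.sound
      ((ConnectedComponent.exact hy).map (Embedding.induce c.supp).toHom)

theorem bijective_ofInduceSupp (hHG : H ≤ G) :
    Function.Bijective fun x : Σ c : G.ConnectedComponent, (H.induce c.supp).ConnectedComponent =>
      ofInduceSupp x.1 x.2 := by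
  refine ⟨?_, fun d => d.ind fun v => ⟨⟨_, (H.induce _).connectedComponentMk ⟨v, rfl⟩⟩, rfl⟩⟩
  rintro ⟨c, d⟩ ⟨c', d'⟩ (h : ofInduceSupp c d = ofInduceSupp c' d')
  obtain rfl : c = c' := by
    rw [← map_ofLE_ofInduceSupp hHG c d, ← map_ofLE_ofInduceSupp hHG c' d', h]
  congr
  induction d, d' using ConnectedComponent.ind₂ with | h u v =>
  exact ConnectedComponent.sound <| (ConnectedComponent.exact h).induce_of_adj_closed
    (c.adj_closed_supp hHG) u.2 v.2

end ConnectedComponent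

end SimpleGraph

open SimpleGraph

theorem weightConn_le_of_iso {V₁ V₂ : Type*} [Fintype V₁] [Fintype V₂]
    {G₁ : SimpleGraph V₁} {G₂ : SimpleGraph V₂} (φ : G₁ ≃g G₂)
    {w₁ : Sym2 V₁ → ℕ} {w₂ : Sym2 V₂ → ℕ} (hw : ∀ e, w₂ (Sym2.map φ e) = w₁ e) :
    weightConn G₁ w₁ ≤ weightConn G₂ w₂ := by
  refine sSup_le_sSup fun κ hκ S hSG hSw => ?_
  have hφφ : ∀ e, Sym2.map φ (Sym2.map φ.symm e) = e := by simp [Sym2.map_map]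
  let S' := S.map ⟨Sym2.map φ.symm, Sym2.map.injective φ.symm.injective⟩
  have hS' : ∀ e, Sym2.map φ e ∈ S ↔ e ∈ S' := fun e => by
    simp only [S', Finset.mem_map, Function.Embedding.coeFn_mk]
    refine ⟨fun h => ⟨_, h, ?_⟩, ?_⟩
    · simp [Sym2.map_map]
    · rintro ⟨e', he', rfl⟩
      rwa [hφφ]
  have hS'G : ↑S' ⊆ G₁.edgeSet := fun e he => by
    rw [← φ.map_mem_edgeSet_iff]
    exact hSG ((hS' e).mpr he)
  have hS'w : ∑ e ∈ S', (w₁ e : ℕ∞) = ∑ e ∈ S, (w₂ e : ℕ∞) := by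
    simp only [S', Finset.sum_map, Function.Embedding.coeFn_mk, ← hw, hφφ]
  exact (φ.deleteEdges (fun e => (hS' e).trans Finset.mem_coe.symm)).connected_iff.mp
    (hκ S' hS'G (hS'w ▸ hSw))

theorem weightConn_eq_of_iso {V₁ V₂ : Type*} [Fintype V₁] [Fintype V₂]
    {G₁ : SimpleGraph V₁} {G₂ : SimpleGraph V₂} (φ : G₁ ≃g G₂)
    {w₁ : Sym2 V₁ → ℕ} {w₂ : Sym2 V₂ → ℕ} (hw : ∀ e, w₂ (Sym2.map φ e) = w₁ e) :
    weightConn G₁ w₁ = weightConn G₂ w₂ :=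
  (weightConn_le_of_iso φ hw).antisymm <| weightConn_le_of_iso φ.symm fun e => by
    rw [← hw]
    simp [Sym2.map_map]

theorem compConn_induce {V : Type*} [Fintype V] (G : SimpleGraph V) (w : Sym2 V → ℕ)
    (A : Set V) (B : Set A) :
    compConn (G.induce A) (fun e => w (Sym2.map Subtype.val e)) B =
      compConn G w (Subtype.val '' B) :=
  weightConn_eq_of_iso (G.induceInduceIso A B) fun e => by
    induction e with
    | _ a b => simp [induceInduceIso, Equiv.Set.image, Equiv.Set.imageOfInjOn]; rfl

theorem compConn_univ {V : Type*} [Fintype V] (G : SimpleGraph V) (w : Sym2 V → ℕ) :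
    compConn G w Set.univ = weightConn G w :=
  weightConn_eq_of_iso G.induceUnivIso fun e => by
    induction e with
    | _ a b => simp [induceUnivIso]

theorem connMultiset_eq_sum {V : Type*} [Fintype V] (G : SimpleGraph V) (w : Sym2 V → ℕ) :
    connMultiset G w = ∑ d : G.ConnectedComponent, {compConn G w d.supp} := by
  rw [connMultiset, Finset.sum, ← Multiset.sum_map_singleton (Multiset.map _ _), Multiset.map_map]
  congr
  exact Subsingleton.elim _ _

theorem connMultiset_of_connected {V : Type*} [Fintype V] {G : SimpleGraph V}
    (hG : G.Connected) (w : Sym2 V → ℕ) : connMultiset G w = {weightConn G w} := by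
  have := hG.preconnected.subsingleton_connectedComponent
  have hsupp : (G.connectedComponentMk hG.nonempty.some).supp = Set.univ :=
    Set.eq_univ_of_forall fun v => Subsingleton.elim _ _
  rw [connMultiset_eq_sum, Fintype.sum_subsingleton _ (G.connectedComponentMk hG.nonempty.some),
    hsupp, compConn_univ]

theorem connMultiset_eq_sum_induce_supp {V : Type*} [Fintype V] {G H : SimpleGraph V}
    (hHG : H ≤ G) (w : Sym2 V → ℕ) :
    connMultiset H w = ∑ c : G.ConnectedComponent,
      connMultiset (H.induce c.supp) (fun e => w (Sym2.map Subtype.val e)) := by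
  simp only [connMultiset_eq_sum]
  rw [← Fintype.sum_bijective _ (ConnectedComponent.bijective_ofInduceSupp hHG) _ _
    fun _ => rfl, Fintype.sum_sigma]
  simp only [ConnectedComponent.supp_ofInduceSupp hHG]
  congr! with c _ d
  exact (compConn_induce _ _ _ _).symm

theorem connMultiset_induce_supp {V : Type*} [Fintype V] {G : SimpleGraph V}
    (w : Sym2 V → ℕ) (c : G.ConnectedComponent) :
    connMultiset (G.induce c.supp) (fun e => w (Sym2.map Subtype.val e)) =
      {compConn G w c.supp} := by
  have hc : (G.induce c.supp).Connected := c.connected_toSimpleGraph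
  rw [connMultiset_of_connected hc, compConn]
  congr!

theorem induce_supp_deleteEdges_of_not_touched {V : Type*} {G : SimpleGraph V}
    {F : Finset (Sym2 V)} {c : G.ConnectedComponent} (hc : ¬Touched G F c) :
    (G.deleteEdges ↑F).induce c.supp = G.induce c.supp := by
  ext a b
  simp only [comap_adj, Function.Embedding.coe_subtype, deleteEdges_adj, and_iff_left_iff_imp]
  intro _ hab
  refine hc ⟨_, hab, fun v hv => ?_⟩
  rcases Sym2.mem_iff.mp hv with rfl | rfl
  exacts [a.2, b.2]

theorem card_touched_le {V : Type*} [Fintype V] (G : SimpleGraph V) (F : Finset (Sym2 V)) :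
    Nat.card {c // Touched G F c} ≤ F.card := by
  rw [Nat.card_eq_fintype_card, Fintype.card_subtype]
  refine (Finset.card_le_card fun c hc => ?_).trans
    (Finset.card_image_le (f := fun e => G.connectedComponentMk e.out.1))
  obtain ⟨e, he, hec⟩ := (Finset.mem_filter.mp hc).2
  exact Finset.mem_image.mpr ⟨e, he, hec _ (Sym2.out_fst_mem e)⟩

theorem connMultiset_deleteEdges {V : Type*} [Fintype V] {G : SimpleGraph V}
    {w : Sym2 V → ℕ} {a : ℕ∞} (hcomp : ∀ c : G.ConnectedComponent, compConn G w c.supp = a)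
    (F : Finset (Sym2 V)) :
    connMultiset (G.deleteEdges ↑F) w =
      Multiset.replicate (Nat.card G.ConnectedComponent - Nat.card {c // Touched G F c}) a +
        ∑ c : {c // Touched G F c}, connMultiset ((G.deleteEdges ↑F).induce c.1.supp)
          (fun e => w (Sym2.map Subtype.val e)) := by
  rw [connMultiset_eq_sum_induce_supp (G.deleteEdges_le _),
    ← Fintype.sum_subtype_add_sum_subtype (Touched G F), add_comm]
  congr 1
  calc ∑ c : {c // ¬Touched G F c},
        connMultiset ((G.deleteEdges ↑F).induce c.1.supp) (fun e => w (Sym2.map Subtype.val e))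
      = ∑ _c : {c // ¬Touched G F c}, {a} := Finset.sum_congr rfl fun c _ => by
        rw [induce_supp_deleteEdges_of_not_touched c.2, connMultiset_induce_supp, hcomp]
    _ = _ := by
      rw [Finset.sum_const, Multiset.nsmul_singleton, Finset.card_univ, Fintype.card_subtype_compl,
        Nat.card_eq_fintype_card, Nat.card_eq_fintype_card]

theorem stmt_18_general {V : Type*} [Fintype V] (G : SimpleGraph V) (w : Sym2 V → ℕ)
    (hw : ∀ e ∈ G.edgeSet, 0 < w e) (lam k : ℕ)
    (hcomp : ∀ c : G.ConnectedComponent, compConn G w c.supp = (lam : ℕ∞))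
    (Λ : Multiset ℕ∞) :
    IsYes G w Λ k ↔
      ∃ F : Finset (Sym2 V), ↑F ⊆ G.edgeSet ∧ (∑ e ∈ F, w e) ≤ k ∧
        Nat.card {c : G.ConnectedComponent // Touched G F c} ≤ k ∧
        ∃ Λs : {c : G.ConnectedComponent // Touched G F c} → Multiset ℕ∞,
          (∀ c, Λs c ≤ Λ) ∧
          ((∑ᶠ c, (Λs c).card) + Nat.card G.ConnectedComponent =
            Multiset.card Λ + Nat.card {c : G.ConnectedComponent // Touched G F c}) ∧
          (∀ c, DomLE (Λs c)
            (connMultiset ((G.deleteEdges ↑F).induce c.1.supp)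
              (fun e => w (Sym2.map Subtype.val e)))) ∧
          DomLE Λ
            (Multiset.replicate
                (Nat.card G.ConnectedComponent -
                  Nat.card {c : G.ConnectedComponent // Touched G F c}) (lam : ℕ∞) +
              ∑ᶠ c, Λs c) := by
  unfold IsYes
  refine exists_congr fun F => and_congr_right fun hFG => and_congr_right fun hFw => ?_
  have hps : Nat.card {c // Touched G F c} ≤ Nat.card G.ConnectedComponent :=
    Finite.card_subtype_le _
  have hpk : Nat.card {c // Touched G F c} ≤ k := calc
    _ ≤ F.card := card_touched_le G F
    _ = ∑ _e ∈ F, 1 := F.card_eq_sum_ones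
    _ ≤ ∑ e ∈ F, w e := Finset.sum_le_sum fun e he => hw e (hFG he)
    _ ≤ k := hFw
  rw [domLE_iff_rel, connMultiset_deleteEdges hcomp, Multiset.rel_add_sum_iff]
  simp only [domLE_iff_rel, finsum_eq_sum_of_fintype, Multiset.card_replicate, hpk, true_and]
  refine exists_congr fun Λs => and_congr_right fun _ => and_congr_left fun _ => ?_
  omega

/-- Let `λ ≤ k` be positive integers and `G` a weighted graph all of whose connected
components have weighted connectivity exactly `λ`. Then `(G,w,Λ,k)` is a yes-instance of
CGWC iff there is `F ⊆ E(G)` with `w(F) ≤ k` such that, with `p ≤ k` components of `G`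
containing an edge of `F`, each such component `c` carries a subtuple `Λ^c ⊆ Λ` such
that (i) the lengths `t_c` of the subtuples sum to `t − s + p` (where `s` is the number
of components of `G` and `t = |Λ|`); (ii) `G_c − F` has exactly `t_c` components whose
connectivities dominate `Λ^c`; and (iii) `Λ ⪯ (s−p)⟨λ⟩ + Σ_c Λ^c`. -/
theorem stmt_18 {V : Type*} [Fintype V] (G : SimpleGraph V) (w : Sym2 V → ℕ)
    (hw : ∀ e ∈ G.edgeSet, 0 < w e) (lam k : ℕ) (hlam : 0 < lam) (hlamk : lam ≤ k)
    (hcomp : ∀ c : G.ConnectedComponent, compConn G w c.supp = (lam : ℕ∞))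
    (Λ : Multiset ℕ∞) :
    IsYes G w Λ k ↔
      ∃ F : Finset (Sym2 V), ↑F ⊆ G.edgeSet ∧ (∑ e ∈ F, w e) ≤ k ∧
        Nat.card {c : G.ConnectedComponent // Touched G F c} ≤ k ∧
        ∃ Λs : {c : G.ConnectedComponent // Touched G F c} → Multiset ℕ∞,
          (∀ c, Λs c ≤ Λ) ∧
          ((∑ᶠ c, (Λs c).card) + Nat.card G.ConnectedComponent =
            Multiset.card Λ + Nat.card {c : G.ConnectedComponent // Touched G F c}) ∧
          (∀ c, DomLE (Λs c)
            (connMultiset ((G.deleteEdges ↑F).induce c.1.supp)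
              (fun e => w (Sym2.map Subtype.val e)))) ∧
          DomLE Λ
            (Multiset.replicate
                (Nat.card G.ConnectedComponent -
                  Nat.card {c : G.ConnectedComponent // Touched G F c}) (lam : ℕ∞) +
              ∑ᶠ c, Λs c) :=
  stmt_18_general G w hw lam k hcomp Λ
end
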